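/- If an effect algebra with n elements has exactly (n-1)(n-2)/2 nontrivial defined sums (the maximum possible), then it is totally ordered, hence isomorphic to the scale effect algebra S_n. -/

import Mathlib

/-- An effect algebra: a set with `zero`, `one`, a partial commutative associative
sum (modelled as an `Option`-valued operation), unique complements, and
`e ⊕ 1` defined only for `e = 0`. -/
structure EffectAlgebra (E : Type*) where
  zero : E
  one : E
  add : E → E → Option E
  comm : ∀ e f, add e f = add f e
  assoc : ∀ e f g, (add e f).bind (fun s => add s g) = (add f g).bind (fun s => add e s)
  compl : E → E
  add_compl : ∀ e, add e (compl e) = some one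
  compl_unique : ∀ e f, add e f = some one → f = compl e
  one_max : ∀ e f, add e one = some f → e = zero

namespace EffectAlgebra

variable {E : Type*}

/-- Intrinsic order: `e ≤ f` iff `f = e ⊕ g` for some `g`. -/
def le (A : EffectAlgebra E) (e f : E) : Prop := ∃ g, A.add e g = some f

/-- Iterated sum `e ⊕ e ⊕ ⋯ ⊕ e` (`n` copies), when defined. -/
def nsum (A : EffectAlgebra E) (e : E) : ℕ → Option E
  | 0 => some A.zero
  | n + 1 => (nsum A e n).bind (fun s => A.add e s)

end EffectAlgebra

/-- The underlying set `{k/(n-1) : 0 ≤ k ≤ n-1}` of the scale effect algebra `S_n`. -/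
def scaleSet (n : ℕ) : Set ℝ := {x | ∃ k : ℕ, k ≤ n - 1 ∧ x = (k : ℝ) / ((n : ℝ) - 1)}

/-! The map `(e, f) ↦ (e, e ⊕ f)` matches the nontrivial defined sums with the pairs `e < g`,
`e ≠ 0`. Adding the `n - 1` pairs `0 < g`, the maximal count says that half of all ordered pairs
of distinct elements are strictly comparable, and for an asymmetric relation this forces any two
distinct elements to be comparable. In the resulting chain the rank `e ↦ #{x | x < e}` is a
bijection onto `{0, …, n - 1}`, additive on defined sums, and `e ⊕ f` is defined exactly when
`rank e + rank f ≤ n - 1`; dividing by `n - 1` identifies the algebra with `S_n`. -/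

/-- The pairs related by `r` and by its converse are disjoint sets of pairs of distinct points,
so together with an incomparable pair they would overflow the `n * (n - 1)` such pairs. -/
theorem rel_or_rel_of_card_filter_rel_ge {α : Type*} [Fintype α] [DecidableEq α]
    (r : α → α → Prop) [DecidableRel r] (hr : ∀ a b, r a b → ¬ r b a)
    (hcard : Fintype.card α * (Fintype.card α - 1) ≤
      2 * (Finset.univ.filter fun p : α × α => r p.1 p.2).card)
    {a b : α} (hab : a ≠ b) : r a b ∨ r b a := by
  by_contra! hnr
  set S := Finset.univ.filter fun p : α × α => r p.1 p.2
  set T := Finset.univ.filter fun p : α × α => r p.2 p.1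
  have hT : T.card = S.card := Finset.card_equiv (Equiv.prodComm α α) (by simp [S, T])
  have hdisj : Disjoint S T :=
    Finset.disjoint_filter.mpr fun p _ h h' => hr _ _ h h'
  have hsub : S ∪ T ⊆ Finset.univ.offDiag \ {(a, b), (b, a)} := by
    intro p hp
    simp only [S, T, Finset.mem_union, Finset.mem_filter, Finset.mem_univ, true_and] at hp
    simp only [Finset.mem_sdiff, Finset.mem_offDiag, Finset.mem_univ, true_and,
      Finset.mem_insert, Finset.mem_singleton]
    refine ⟨fun h => ?_, ?_⟩
    · rcases hp with hp | hp <;> exact hr _ _ hp (h ▸ hp)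
    · rintro (rfl | rfl) <;> simp_all
  have hpair : ({(a, b), (b, a)} : Finset (α × α)) ⊆ Finset.univ.offDiag := by
    simp [Finset.insert_subset_iff, hab, hab.symm]
  have hle := Finset.card_le_card hsub
  have htwo := Finset.card_le_card hpair
  rw [Finset.card_union_of_disjoint hdisj, hT, Finset.card_sdiff_of_subset hpair] at hle
  rw [Finset.card_pair (by simp [hab]), Finset.offDiag_card, Finset.card_univ] at hle htwo
  rw [Nat.mul_sub_one] at hcard
  omega

namespace EffectAlgebra

variable {E : Type*} (A : EffectAlgebra E)

lemma exists_assoc_right {e f g s t : E} (hs : A.add e f = some s) (ht : A.add s g = some t) :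
    ∃ u, A.add f g = some u ∧ A.add e u = some t := by
  have h := A.assoc e f g
  rw [hs, Option.bind_some, ht] at h
  exact Option.bind_eq_some_iff.mp h.symm

lemma exists_assoc_left {e f g u t : E} (hu : A.add f g = some u) (ht : A.add e u = some t) :
    ∃ s, A.add e f = some s ∧ A.add s g = some t := by
  have h := A.assoc e f g
  rw [hu, Option.bind_some, ht] at h
  exact Option.bind_eq_some_iff.mp h

lemma compl_add (e : E) : A.add (A.compl e) e = some A.one :=
  (A.comm _ _).trans (A.add_compl e)

lemma compl_compl (e : E) : A.compl (A.compl e) = e :=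
  (A.compl_unique _ _ (A.compl_add e)).symm

lemma compl_one : A.compl A.one = A.zero :=
  A.one_max _ _ (A.compl_add A.one)

lemma one_add_zero : A.add A.one A.zero = some A.one :=
  A.compl_one ▸ A.add_compl A.one

lemma add_zero (e : E) : A.add e A.zero = some e := by
  obtain ⟨u, hu, hcu⟩ := A.exists_assoc_right (A.compl_add e) A.one_add_zero
  rw [hu, A.compl_unique _ _ hcu, A.compl_compl]

lemma zero_add (e : E) : A.add A.zero e = some e :=
  (A.comm _ _).trans (A.add_zero e)

lemma add_compl_eq_compl_of_add {a x d : E} (h : A.add a x = some d) :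
    A.add (A.compl d) a = some (A.compl x) := by
  obtain ⟨u, hu, hau⟩ := A.exists_assoc_right h (A.add_compl d)
  rw [A.compl_unique _ _ hau] at hu
  obtain ⟨v, hv, hxv⟩ := A.exists_assoc_right hu (A.compl_add a)
  rw [hv, A.compl_unique _ _ hxv]

lemma add_left_cancel {a b c d : E} (hb : A.add a b = some d) (hc : A.add a c = some d) :
    b = c := by
  have h := (A.add_compl_eq_compl_of_add hb).symm.trans (A.add_compl_eq_compl_of_add hc)
  rw [← A.compl_compl b, ← A.compl_compl c, Option.some.inj h]

lemma eq_zero_of_add_eq_zero {a b : E} (h : A.add a b = some A.zero) : b = A.zero := by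
  obtain ⟨u, hu, -⟩ := A.exists_assoc_right h (A.zero_add A.one)
  exact A.one_max _ _ hu

lemma le_refl (e : E) : A.le e e := ⟨A.zero, A.add_zero e⟩

lemma le_trans {a b c : E} (hab : A.le a b) (hbc : A.le b c) : A.le a c := by
  obtain ⟨g, hg⟩ := hab
  obtain ⟨h, hh⟩ := hbc
  obtain ⟨w, -, hw⟩ := A.exists_assoc_right hg hh
  exact ⟨w, hw⟩

lemma le_antisymm {a b : E} (hab : A.le a b) (hba : A.le b a) : a = b := by
  obtain ⟨g, hg⟩ := hab
  obtain ⟨h, hh⟩ := hba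
  obtain ⟨w, hw, haw⟩ := A.exists_assoc_right hg hh
  rw [A.add_left_cancel haw (A.add_zero a), A.comm] at hw
  rw [A.eq_zero_of_add_eq_zero hw, A.add_zero] at hg
  exact Option.some.inj hg

lemma zero_le (e : E) : A.le A.zero e := ⟨e, A.zero_add e⟩

lemma le_one (e : E) : A.le e A.one := ⟨A.compl e, A.add_compl e⟩

lemma eq_one_of_one_le {e : E} (h : A.le A.one e) : e = A.one := by
  obtain ⟨g, hg⟩ := h
  rw [A.comm] at hg
  rw [A.one_max _ _ hg, A.zero_add] at hg
  exact (Option.some.inj hg).symm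

def lt (a b : E) : Prop := A.le a b ∧ a ≠ b

lemma lt_of_lt_of_le {a b c : E} (hab : A.lt a b) (hbc : A.le b c) : A.lt a c :=
  ⟨A.le_trans hab.1 hbc, fun hac => hab.2 (A.le_antisymm hab.1 (hac ▸ hbc))⟩

lemma exists_add_le_of_le {e f g y : E} (hy : A.le y f) (h : A.add e f = some g) :
    ∃ s, A.add e y = some s ∧ A.le s g := by
  obtain ⟨d, hd⟩ := hy
  obtain ⟨s, hs, hsd⟩ := A.exists_assoc_left hd h
  exact ⟨s, hs, d, hsd⟩

lemma le_of_add_le_add_left {e y f x g : E} (hx : A.add e y = some x) (hg : A.add e f = some g)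
    (h : A.le x g) : A.le y f := by
  obtain ⟨c, hc⟩ := h
  obtain ⟨w, hw, hew⟩ := A.exists_assoc_right hx hc
  exact ⟨c, hw.trans (congrArg some (A.add_left_cancel hew hg))⟩

open scoped Classical

section Rank

variable [Fintype E]

noncomputable def rank (e : E) : ℕ := (Finset.univ.filter fun x => A.lt x e).card

lemma rank_one : A.rank A.one = Fintype.card E - 1 := by
  have : Finset.univ.filter (fun x => A.lt x A.one) = Finset.univ.erase A.one := by
    ext x
    simp only [Finset.mem_filter, Finset.mem_univ, true_and, Finset.mem_erase, and_true]
    exact ⟨And.right, fun hx => ⟨A.le_one x, hx⟩⟩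
  rw [rank, this, Finset.card_erase_of_mem (Finset.mem_univ _), Finset.card_univ]

lemma rank_lt_rank {a b : E} (h : A.lt a b) : A.rank a < A.rank b := by
  refine Finset.card_lt_card (Finset.ssubset_iff_of_subset ?_ |>.mpr ⟨a, ?_, ?_⟩)
  · intro x hx
    simp only [Finset.mem_filter, Finset.mem_univ, true_and] at hx ⊢
    exact A.lt_of_lt_of_le hx h.1
  · simpa using h
  · simp only [Finset.mem_filter, Finset.mem_univ, true_and]
    exact fun h => h.2 rfl

lemma rank_le (e : E) : A.rank e ≤ Fintype.card E - 1 := by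
  rw [← A.rank_one]
  obtain rfl | hne := eq_or_ne e A.one
  · exact Nat.le_refl _
  · exact (A.rank_lt_rank ⟨A.le_one e, hne⟩).le

/-- `y ↦ e ⊕ y` maps `{y | y < f}` onto the interval `[e, e ⊕ f)`. -/
lemma card_filter_le_lt_eq_rank {e f g : E} (h : A.add e f = some g) :
    (Finset.univ.filter fun x => A.le e x ∧ A.lt x g).card = A.rank f := by
  refine (Finset.card_bij (fun y _ => (A.add e y).getD A.zero) ?_ ?_ ?_).symm
  · intro y hy
    simp only [Finset.mem_filter, Finset.mem_univ, true_and] at hy ⊢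
    obtain ⟨s, hs, hsg⟩ := A.exists_add_le_of_le hy.1 h
    rw [hs, Option.getD_some]
    exact ⟨⟨y, hs⟩, hsg, fun hsg => hy.2 (A.add_left_cancel (hsg ▸ hs) h)⟩
  · intro y₁ hy₁ y₂ hy₂ heq
    simp only [Finset.mem_filter, Finset.mem_univ, true_and] at hy₁ hy₂
    obtain ⟨s₁, hs₁, -⟩ := A.exists_add_le_of_le hy₁.1 h
    obtain ⟨s₂, hs₂, -⟩ := A.exists_add_le_of_le hy₂.1 h
    rw [hs₁, hs₂, Option.getD_some, Option.getD_some] at heq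
    exact A.add_left_cancel (heq ▸ hs₁) hs₂
  · intro x hx
    simp only [Finset.mem_filter, Finset.mem_univ, true_and] at hx
    obtain ⟨⟨y, hy⟩, hxg⟩ := hx
    refine ⟨y, ?_, by rw [hy, Option.getD_some]⟩
    simp only [Finset.mem_filter, Finset.mem_univ, true_and]
    refine ⟨A.le_of_add_le_add_left hy h hxg.1, ?_⟩
    rintro rfl
    exact hxg.2 (Option.some.inj (hy.symm.trans h))

variable (htot : ∀ a b : E, A.le a b ∨ A.le b a)
include htot

lemma rank_injective : Function.Injective A.rank := by
  intro a b h
  by_contra hne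
  rcases htot a b with hab | hba
  · exact (A.rank_lt_rank ⟨hab, hne⟩).ne h
  · exact (A.rank_lt_rank ⟨hba, Ne.symm hne⟩).ne' h

lemma exists_rank_eq {k : ℕ} (hk : k < Fintype.card E) : ∃ e, A.rank e = k := by
  let r : E → Fin (Fintype.card E) := fun e => ⟨A.rank e, by have := A.rank_le e; omega⟩
  have hr : Function.Bijective r := (Fintype.bijective_iff_injective_and_card r).mpr
    ⟨fun a b h => A.rank_injective htot (congrArg Fin.val h), by simp⟩
  obtain ⟨e, he⟩ := hr.2 ⟨k, hk⟩
  exact ⟨e, congrArg Fin.val he⟩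

/-- Totality splits `{x | x < e ⊕ f}` into `{x | x < e}` and the interval `[e, e ⊕ f)`. -/
lemma rank_add {e f g : E} (h : A.add e f = some g) : A.rank g = A.rank e + A.rank f := by
  have hsplit : (Finset.univ.filter fun x => A.lt x g) =
      (Finset.univ.filter fun x => A.lt x e) ∪
        (Finset.univ.filter fun x => A.le e x ∧ A.lt x g) := by
    ext x
    simp only [Finset.mem_filter, Finset.mem_univ, true_and, Finset.mem_union]
    refine ⟨fun hx => ?_, ?_⟩
    · by_cases hxe : A.le e x
      · exact Or.inr ⟨hxe, hx⟩
      · exact Or.inl ⟨(htot x e).resolve_right hxe, fun h => hxe (h ▸ A.le_refl x)⟩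
    · rintro (hx | hx)
      · exact A.lt_of_lt_of_le hx ⟨f, h⟩
      · exact hx.2
  have hdisj : Disjoint (Finset.univ.filter fun x => A.lt x e)
      (Finset.univ.filter fun x => A.le e x ∧ A.lt x g) :=
    Finset.disjoint_filter.mpr fun x _ hx hx' => hx.2 (A.le_antisymm hx.1 hx'.1)
  rw [rank, hsplit, Finset.card_union_of_disjoint hdisj, A.card_filter_le_lt_eq_rank h]
  rfl

lemma exists_add_iff_rank_add_le (e f : E) :
    (∃ g, A.add e f = some g) ↔ A.rank e + A.rank f ≤ Fintype.card E - 1 := by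
  refine ⟨fun ⟨g, hg⟩ => A.rank_add htot hg ▸ A.rank_le g, fun hle => ?_⟩
  have hcompl : A.rank e + A.rank (A.compl e) = Fintype.card E - 1 := by
    rw [← A.rank_add htot (A.add_compl e), A.rank_one]
  rcases htot f (A.compl e) with hf | hf
  · obtain ⟨s, hs, -⟩ := A.exists_add_le_of_le hf (A.add_compl e)
    exact ⟨s, hs⟩
  · obtain rfl | hne := eq_or_ne f (A.compl e)
    · exact ⟨A.one, A.add_compl e⟩
    · have := A.rank_lt_rank ⟨hf, hne.symm⟩
      omega

end Rank

section Counting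

variable [Fintype E] [DecidableEq E]

def nontrivialSums : Finset (E × E) :=
  Finset.univ.filter fun p : E × E =>
    p.1 ≠ A.zero ∧ p.1 ≠ A.one ∧ p.2 ≠ A.zero ∧ p.2 ≠ A.one ∧ (A.add p.1 p.2).isSome

lemma card_nontrivialSums :
    A.nontrivialSums.card =
      (Finset.univ.filter fun p : E × E => A.lt p.1 p.2 ∧ p.1 ≠ A.zero).card := by
  refine Finset.card_bij (fun p _ => (p.1, (A.add p.1 p.2).getD A.zero)) ?_ ?_ ?_
  · intro p hp
    simp only [nontrivialSums, Finset.mem_filter, Finset.mem_univ, true_and] at hp ⊢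
    obtain ⟨h0, -, hf0, -, hdef⟩ := hp
    obtain ⟨g, hg⟩ := Option.isSome_iff_exists.mp hdef
    rw [hg, Option.getD_some]
    exact ⟨⟨⟨p.2, hg⟩, fun h => hf0 (A.add_left_cancel hg (h ▸ A.add_zero p.1))⟩, h0⟩
  · rintro ⟨e, f⟩ hp ⟨e', f'⟩ hp' heq
    simp only [nontrivialSums, Finset.mem_filter, Finset.mem_univ, true_and] at hp hp'
    obtain ⟨g, hg⟩ := Option.isSome_iff_exists.mp hp.2.2.2.2
    obtain ⟨g', hg'⟩ := Option.isSome_iff_exists.mp hp'.2.2.2.2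
    simp only [hg, hg', Option.getD_some, Prod.mk.injEq] at heq
    obtain ⟨rfl, rfl⟩ := heq
    rw [A.add_left_cancel hg hg']
  · rintro ⟨e, g⟩ hq
    simp only [Finset.mem_filter, Finset.mem_univ, true_and] at hq
    obtain ⟨⟨⟨f, hf⟩, hne⟩, he0⟩ := hq
    refine ⟨(e, f), ?_, by rw [hf, Option.getD_some]⟩
    simp only [nontrivialSums, Finset.mem_filter, Finset.mem_univ, true_and, hf,
      Option.isSome_some, and_true]
    refine ⟨he0, fun he1 => hne ?_, fun hf0 => hne ?_,
      fun hf1 => he0 (A.one_max _ _ (hf1 ▸ hf))⟩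
    · exact he1.trans (A.eq_one_of_one_le (he1 ▸ ⟨f, hf⟩)).symm
    · exact Option.some.inj ((A.add_zero e).symm.trans (hf0 ▸ hf))

lemma card_filter_zero_lt :
    (Finset.univ.filter fun p : E × E => A.lt p.1 p.2 ∧ p.1 = A.zero).card =
      Fintype.card E - 1 := by
  rw [← Finset.card_univ, ← Finset.card_erase_of_mem (Finset.mem_univ A.zero)]
  refine Finset.card_bij' (fun p _ => p.2) (fun b _ => (A.zero, b)) ?_ ?_ ?_ (fun _ _ => rfl)
  · intro p hp
    simp only [Finset.mem_filter, Finset.mem_univ, true_and, Finset.mem_erase, and_true] at hp ⊢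
    exact fun h => hp.1.2 (hp.2.trans h.symm)
  · intro b hb
    simp only [Finset.mem_filter, Finset.mem_univ, true_and, Finset.mem_erase, and_true] at hb ⊢
    exact ⟨A.zero_le b, Ne.symm hb⟩
  · intro p hp
    simp only [Finset.mem_filter, Finset.mem_univ, true_and] at hp
    rw [← hp.2]

lemma card_filter_lt : (Finset.univ.filter fun p : E × E => A.lt p.1 p.2).card =
    A.nontrivialSums.card + (Fintype.card E - 1) := by
  rw [card_nontrivialSums, ← A.card_filter_zero_lt, ← Finset.card_filter_add_card_filter_not
    (p := fun p : E × E => p.1 ≠ A.zero), Finset.filter_filter, Finset.filter_filter]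
  simp_rw [not_not]

/-- With the maximal count, `A.lt` relates `n * (n - 1) / 2` pairs, half of all pairs of
distinct elements. -/
lemma total_of_card_nontrivialSums
    (hmax : A.nontrivialSums.card = (Fintype.card E - 1) * (Fintype.card E - 2) / 2) (a b : E) :
    A.le a b ∨ A.le b a := by
  obtain rfl | hab := eq_or_ne a b
  · exact Or.inl (A.le_refl a)
  have hcard : Fintype.card E * (Fintype.card E - 1) ≤
      2 * (Finset.univ.filter fun p : E × E => A.lt p.1 p.2).card := by
    rw [card_filter_lt, hmax]
    obtain _ | _ | k := Fintype.card E
    · simp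
    · simp
    · have heven : (k + 1) * k / 2 * 2 = (k + 1) * k :=
        Nat.div_two_mul_two_of_even (Nat.even_mul_pred_self (k + 1))
      show (k + 2) * (k + 1) ≤ 2 * ((k + 1) * k / 2 + (k + 1))
      nlinarith
  exact (rel_or_rel_of_card_filter_rel_ge A.lt (fun a b h h' => h.2 (A.le_antisymm h.1 h'.1))
    hcard hab).imp And.left And.left

end Counting

end EffectAlgebra

theorem max_defined_sums_scale {E : Type*} [Fintype E] [DecidableEq E]
    (A : EffectAlgebra E) (n : ℕ) (hn : 2 ≤ n) (hcard : Fintype.card E = n)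
    (hmax : (Finset.univ.filter (fun p : E × E =>
        p.1 ≠ A.zero ∧ p.1 ≠ A.one ∧ p.2 ≠ A.zero ∧ p.2 ≠ A.one ∧
        (A.add p.1 p.2).isSome)).card = (n - 1) * (n - 2) / 2) :
    (∀ a b : E, A.le a b ∨ A.le b a) ∧
    ∃ Θ : E → ℝ,
      (∀ e, Θ e ∈ scaleSet n) ∧
      Function.Injective Θ ∧
      (∀ x ∈ scaleSet n, ∃ e, Θ e = x) ∧
      Θ A.one = 1 ∧
      (∀ e f, (∃ g, A.add e f = some g) ↔ Θ e + Θ f ≤ 1) ∧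
      (∀ e f g, A.add e f = some g → Θ g = Θ e + Θ f) := by
  subst hcard
  have htot := A.total_of_card_nontrivialSums hmax
  have hpos : (0 : ℝ) < (Fintype.card E : ℝ) - 1 := by
    have : (2 : ℝ) ≤ Fintype.card E := by exact_mod_cast hn
    linarith
  have hcast : ((Fintype.card E - 1 : ℕ) : ℝ) = (Fintype.card E : ℝ) - 1 := by
    rw [Nat.cast_sub (by omega), Nat.cast_one]
  refine ⟨htot, fun e => (A.rank e : ℝ) / ((Fintype.card E : ℝ) - 1),
    fun e => ⟨A.rank e, A.rank_le e, rfl⟩, fun a b h => A.rank_injective htot ?_, ?_, ?_,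
    fun e f => ?_, fun e f g h => ?_⟩ <;> beta_reduce
  · exact_mod_cast (div_left_inj' hpos.ne').mp h
  · rintro x ⟨k, hk, rfl⟩
    obtain ⟨e, he⟩ := A.exists_rank_eq htot (k := k) (by omega)
    exact ⟨e, by rw [he]⟩
  · rw [A.rank_one, hcast, div_self hpos.ne']
  · rw [A.exists_add_iff_rank_add_le htot, ← add_div, div_le_one hpos, ← hcast]
    exact_mod_cast Iff.rfl
  · rw [A.rank_add htot h, Nat.cast_add, add_div]
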